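/- Let f : ℕ → (0,∞) be monotone and suppose f(2^n) is doubling, i.e. there exist constants c, C > 0 with c·f(2^n) ≤ f(2^{2n}) ≤ C·f(2^n) for all n ≥ 1 (for f decreasing, it suffices that f(2^{2n}) ≥ c·f(2^n)). Then f is roughly slowly varying: there exists a slowly varying function g with f ≃ g, where f ≃ g means there exist positive constants c₁,c₂,c₃,c₄ and x₀ with c₁ f(c₂ x) ≤ g(x) ≤ c₃ f(c₄ x) for all x ≥ x₀. -/
import Mathlib


open Set

/-- `g` is slowly varying: `sup_{λ∈[1,2]} g(λt)/g(t)` and `inf_{λ∈[1,2]} g(λt)/g(t)` both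
tend to `1` as `t → ∞`, expressed in `ε`-form. -/
def SlowlyVarying (g : ℝ → ℝ) : Prop :=
  ∀ ε : ℝ, 0 < ε → ∃ t₀ : ℝ, ∀ t : ℝ, t₀ ≤ t → ∀ lam : ℝ, lam ∈ Icc (1 : ℝ) 2 →
    |g (lam * t) / g t - 1| ≤ ε

/-- `f ≃ g`: there are positive constants `c₁,c₂,c₃,c₄` and a threshold `x₀` with
`c₁ f(c₂ x) ≤ g(x) ≤ c₃ f(c₄ x)` for all `x ≥ x₀`. -/
def RoughEquiv (f g : ℝ → ℝ) : Prop :=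
  ∃ c₁ c₂ c₃ c₄ x₀ : ℝ, 0 < c₁ ∧ 0 < c₂ ∧ 0 < c₃ ∧ 0 < c₄ ∧
    ∀ x : ℝ, x₀ ≤ x → c₁ * f (c₂ * x) ≤ g x ∧ g x ≤ c₃ * f (c₄ * x)

/-- Piecewise-linear interpolation of a sequence. -/
noncomputable def interpSeq (b : ℕ → ℝ) (s : ℝ) : ℝ :=
  b ⌊s⌋₊ + (s - ⌊s⌋₊) * (b (⌊s⌋₊ + 1) - b ⌊s⌋₊)

lemma interpSeq_lip (b : ℕ → ℝ) (K : ℝ) (hK : ∀ k, |b (k + 1) - b k| ≤ K)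
    {s s' : ℝ} (hs : 0 ≤ s) (h1 : s ≤ s') (h2 : s' ≤ s + 1) :
    |interpSeq b s' - interpSeq b s| ≤ K * (s' - s) := by
  have hs' : 0 ≤ s' := le_trans hs h1
  have hm1 : ⌊s⌋₊ ≤ ⌊s'⌋₊ := Nat.floor_le_floor h1
  have hm2 : ⌊s'⌋₊ ≤ ⌊s⌋₊ + 1 := by
    have := Nat.floor_le_floor h2
    rwa [Nat.floor_add_one hs] at this
  have hfl : (⌊s⌋₊ : ℝ) ≤ s := Nat.floor_le hs
  have hfl' : (⌊s'⌋₊ : ℝ) ≤ s' := Nat.floor_le hs'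
  have hlt : s < ⌊s⌋₊ + 1 := Nat.lt_floor_add_one s
  have hcase : ⌊s'⌋₊ = ⌊s⌋₊ ∨ ⌊s'⌋₊ = ⌊s⌋₊ + 1 := by omega
  rcases hcase with h | h
  · have e1 : interpSeq b s' - interpSeq b s
        = (s' - s) * (b (⌊s⌋₊ + 1) - b ⌊s⌋₊) := by
      simp only [interpSeq, h]; ring
    rw [e1, abs_mul, abs_of_nonneg (by linarith)]
    rw [mul_comm]
    exact mul_le_mul_of_nonneg_right (hK _) (by linarith)
  · have e1 : interpSeq b s' - interpSeq b s
        = (s' - (⌊s⌋₊ + 1)) * (b (⌊s⌋₊ + 1 + 1) - b (⌊s⌋₊ + 1))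
          + ((⌊s⌋₊ + 1) - s) * (b (⌊s⌋₊ + 1) - b ⌊s⌋₊) := by
      simp only [interpSeq, h]; push_cast; ring
    have h1' : (0:ℝ) ≤ s' - (⌊s⌋₊ + 1) := by
      have : ((⌊s⌋₊ : ℝ) + 1) = (⌊s'⌋₊ : ℝ) := by exact_mod_cast h.symm
      linarith [hfl']
    have h2' : (0:ℝ) ≤ (⌊s⌋₊ + 1) - s := by linarith
    calc |interpSeq b s' - interpSeq b s|
        ≤ |(s' - (⌊s⌋₊ + 1)) * (b (⌊s⌋₊ + 1 + 1) - b (⌊s⌋₊ + 1))|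
          + |((⌊s⌋₊ + 1) - s) * (b (⌊s⌋₊ + 1) - b ⌊s⌋₊)| := by
          rw [e1]; exact abs_add_le _ _
      _ = (s' - (⌊s⌋₊ + 1)) * |b (⌊s⌋₊ + 1 + 1) - b (⌊s⌋₊ + 1)|
          + ((⌊s⌋₊ + 1) - s) * |b (⌊s⌋₊ + 1) - b ⌊s⌋₊| := by
          rw [abs_mul, abs_mul, abs_of_nonneg h1', abs_of_nonneg h2']
      _ ≤ (s' - (⌊s⌋₊ + 1)) * K + ((⌊s⌋₊ + 1) - s) * K := by
          gcongr
          · exact hK _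
          · exact hK _
      _ = K * (s' - s) := by ring

lemma interpSeq_mem (b : ℕ → ℝ) {s : ℝ} (hs : 0 ≤ s) :
    min (b ⌊s⌋₊) (b (⌊s⌋₊ + 1)) ≤ interpSeq b s ∧
      interpSeq b s ≤ max (b ⌊s⌋₊) (b (⌊s⌋₊ + 1)) := by
  have hfl : (⌊s⌋₊ : ℝ) ≤ s := Nat.floor_le hs
  have hlt : s < ⌊s⌋₊ + 1 := Nat.lt_floor_add_one s
  unfold interpSeq
  rcases le_total (b ⌊s⌋₊) (b (⌊s⌋₊ + 1)) with h | h
  · constructor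
    · rw [min_eq_left h]; nlinarith
    · rw [max_eq_right h]; nlinarith
  · constructor
    · rw [min_eq_right h]; nlinarith
    · rw [max_eq_left h]; nlinarith

/-- The candidate slowly varying function. -/
noncomputable def gaux (f : ℝ → ℝ) (x : ℝ) : ℝ :=
  Real.exp (interpSeq (fun k => Real.log (f ((2:ℝ) ^ (2 ^ k))))
    (Real.logb 2 (max (Real.logb 2 x) 1)))

set_option maxHeartbeats 1000000 in
/-- if `f` is monotone and positive on `[1,∞)` and `f(2^n)` is doubling, then `f`
is roughly slowly varying. -/
theorem stmt2 (f : ℝ → ℝ) (hpos : ∀ x : ℝ, 1 ≤ x → 0 < f x)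
    (hmono : MonotoneOn f (Ici (1 : ℝ)) ∨ AntitoneOn f (Ici (1 : ℝ)))
    (hdbl : ∃ c C : ℝ, 0 < c ∧ 0 < C ∧ ∀ n : ℕ, 1 ≤ n →
      c * f (2 ^ n) ≤ f (2 ^ (2 * n)) ∧ f (2 ^ (2 * n)) ≤ C * f (2 ^ n)) :
    ∃ g : ℝ → ℝ, (∀ x : ℝ, 1 ≤ x → 0 < g x) ∧ SlowlyVarying g ∧ RoughEquiv f g := by
  obtain ⟨c, C, hc, hC, hd⟩ := hdbl
  -- abbreviations
  set a : ℕ → ℝ := fun k => f ((2:ℝ) ^ (2 ^ k)) with ha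
  set b : ℕ → ℝ := fun k => Real.log (a k) with hb
  have h2b : (1:ℝ) < 2 := one_lt_two
  have hA1 : ∀ k : ℕ, (1:ℝ) ≤ (2:ℝ) ^ (2 ^ k) := fun k => one_le_pow₀ (by norm_num)
  have hapos : ∀ k, 0 < a k := fun k => hpos _ (hA1 k)
  set c' : ℝ := min c 1 with hc'
  set C' : ℝ := max C 1 with hC'
  have hc'0 : 0 < c' := lt_min hc one_pos
  have hc'1 : c' ≤ 1 := min_le_right _ _
  have hC'1 : (1:ℝ) ≤ C' := le_max_right _ _
  -- doubling on `a`
  have hda : ∀ k : ℕ, c' * a k ≤ a (k + 1) ∧ a (k + 1) ≤ C' * a k := by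
    intro k
    have hk : 1 ≤ 2 ^ k := Nat.one_le_two_pow
    have h := hd (2 ^ k) hk
    have he : 2 * 2 ^ k = 2 ^ (k + 1) := by ring
    rw [he] at h
    constructor
    · calc c' * a k ≤ c * a k :=
            mul_le_mul_of_nonneg_right (min_le_left _ _) (hapos k).le
        _ ≤ a (k + 1) := h.1
    · calc a (k + 1) ≤ C * a k := h.2
        _ ≤ C' * a k := mul_le_mul_of_nonneg_right (le_max_left _ _) (hapos k).le
  set M : ℝ := max C' (1 / c') with hM
  have hM1 : (1:ℝ) ≤ M := le_trans hC'1 (le_max_left _ _)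
  have hM0 : (0:ℝ) < M := lt_of_lt_of_le one_pos hM1
  set K : ℝ := Real.log M with hK
  have hK0 : 0 ≤ K := Real.log_nonneg hM1
  -- Lipschitz bound on b
  have hKb : ∀ k, |b (k + 1) - b k| ≤ K := by
    intro k
    obtain ⟨hlo, hhi⟩ := hda k
    rw [abs_le]
    constructor
    · have h1 : Real.log (c' * a k) ≤ b k + (b (k+1) - b k) := by
        have := Real.log_le_log (mul_pos hc'0 (hapos k)) hlo
        simpa [hb] using this
      have h2 : Real.log (c' * a k) = Real.log c' + b k := by
        rw [Real.log_mul (ne_of_gt hc'0) (ne_of_gt (hapos k))]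
      have h4 : 1 ≤ c' * M := by
        have h5 : 1 / c' ≤ M := le_max_right _ _
        calc (1:ℝ) = c' * (1/c') := by field_simp
          _ ≤ c' * M := mul_le_mul_of_nonneg_left h5 hc'0.le
      have hcm : M⁻¹ ≤ c' := by
        rw [inv_eq_one_div, div_le_iff₀ hM0]; linarith
      have h3 : -K ≤ Real.log c' := by
        rw [hK, ← Real.log_inv]
        exact Real.log_le_log (inv_pos.2 hM0) hcm
      linarith
    · have h1 : b (k+1) ≤ Real.log (C' * a k) :=
        Real.log_le_log (hapos (k+1)) hhi
      have h2 : Real.log (C' * a k) = Real.log C' + b k := by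
        rw [Real.log_mul (by positivity) (ne_of_gt (hapos k))]
      have h3 : Real.log C' ≤ K := Real.log_le_log (by positivity) (le_max_left _ _)
      linarith
  have hg : ∀ x, gaux f x
      = Real.exp (interpSeq b (Real.logb 2 (max (Real.logb 2 x) 1))) := fun x => rfl
  refine ⟨gaux f, fun x _ => Real.exp_pos _, ?_, ?_⟩
  · -- Slowly varying
    intro ε hε
    have hL : 0 < Real.log (1 + ε) := Real.log_pos (by linarith)
    set L := Real.log (1 + ε) with hLdef
    set R : ℝ := max 2 (2 * K / L) with hR
    have hR2 : (2:ℝ) ≤ R := le_max_left _ _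
    have hR0 : (0:ℝ) < R := by linarith
    refine ⟨(2:ℝ) ^ R, ?_⟩
    intro t ht lam hlam
    obtain ⟨hlam1, hlam2⟩ := hlam
    have ht0 : (0:ℝ) < t := lt_of_lt_of_le (Real.rpow_pos_of_pos two_pos R) ht
    have hu : R ≤ Real.logb 2 t := by
      have := Real.logb_le_logb_of_le h2b (Real.rpow_pos_of_pos two_pos R) ht
      rwa [Real.logb_rpow two_pos (by norm_num)] at this
    set u : ℝ := Real.logb 2 t with hudef
    have hu2 : (2:ℝ) ≤ u := le_trans hR2 hu
    have hu0 : (0:ℝ) < u := by linarith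
    have hlt0 : (0:ℝ) < lam * t := mul_pos (by linarith) ht0
    have hu'eq : Real.logb 2 (lam * t) = Real.logb 2 lam + u := by
      rw [Real.logb_mul (by linarith) (ne_of_gt ht0)]
    set u' : ℝ := Real.logb 2 (lam * t) with hu'def
    have hlam0 : 0 ≤ Real.logb 2 lam := Real.logb_nonneg h2b hlam1
    have hlam1' : Real.logb 2 lam ≤ 1 := by
      have := Real.logb_le_logb_of_le h2b (by linarith : (0:ℝ) < lam) hlam2
      simpa using this
    have huu' : u ≤ u' := by rw [hu'eq]; linarith
    have hu'1 : u' ≤ u + 1 := by rw [hu'eq]; linarith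
    -- clamps are inactive
    have hmax : max u 1 = u := max_eq_left (by linarith)
    have hmax' : max u' 1 = u' := max_eq_left (by linarith)
    set s : ℝ := Real.logb 2 u with hsdef
    set s' : ℝ := Real.logb 2 u' with hs'def
    have hs0 : 0 ≤ s := Real.logb_nonneg h2b (by linarith)
    have hss' : s ≤ s' := Real.logb_le_logb_of_le h2b hu0 huu'
    have hds : s' - s ≤ 2 / u := by
      have h1 : s' - s = (Real.log u' - Real.log u) / Real.log 2 := by
        rw [hsdef, hs'def, Real.logb, Real.logb]; ring
      have h2 : Real.log u' - Real.log u = Real.log (u' / u) := by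
        rw [Real.log_div (by linarith) (ne_of_gt hu0)]
      have h3 : Real.log (u' / u) ≤ u' / u - 1 :=
        Real.log_le_sub_one_of_pos (div_pos (by linarith) hu0)
      have h4 : u' / u - 1 ≤ 1 / u := by
        rw [div_sub_one (ne_of_gt hu0)]
        gcongr
        linarith
      have hlog2 : (1:ℝ)/2 ≤ Real.log 2 := by
        linarith [Real.log_two_gt_d9]
      calc s' - s = (Real.log u' - Real.log u) / Real.log 2 := h1
        _ ≤ (1/u) / Real.log 2 := by
            have h5 : Real.log u' - Real.log u ≤ 1/u := by rw [h2]; linarith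
            gcongr
        _ ≤ (1/u) / (1/2) := by
            apply div_le_div_of_nonneg_left (by positivity) (by norm_num) hlog2
        _ = 2/u := by ring
    have hds1 : s' ≤ s + 1 := by
      have h5 : 2/u ≤ 1 := by rw [div_le_one hu0]; linarith
      linarith
    have hlip := interpSeq_lip b K hKb hs0 hss' hds1
    have hbound : K * (s' - s) ≤ L := by
      have h2u : (2:ℝ)/u ≤ 2/R := div_le_div_of_nonneg_left (by norm_num) hR0 hu
      have h6 : 2*K/L ≤ R := le_max_right _ _
      rw [div_le_iff₀ hL] at h6
      have h7 : K * (2/R) ≤ L := by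
        rw [show K * (2/R) = 2*K/R by ring, div_le_iff₀ hR0]
        linarith
      have h8 : K * (s' - s) ≤ K * (2/u) := mul_le_mul_of_nonneg_left hds hK0
      have h9 : K * (2/u) ≤ K * (2/R) := mul_le_mul_of_nonneg_left h2u hK0
      linarith
    have hgt : gaux f t = Real.exp (interpSeq b s) := by rw [hg t, hmax]
    have hglt : gaux f (lam * t) = Real.exp (interpSeq b s') := by rw [hg _, hmax']
    rw [hgt, hglt, ← Real.exp_sub]
    set δ := interpSeq b s' - interpSeq b s with hδdef
    have hδ : |δ| ≤ L := le_trans hlip hbound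
    rw [abs_le] at hδ
    obtain ⟨hδ1, hδ2⟩ := hδ
    have hε' : (0:ℝ) < 1 + ε := by linarith only [hε]
    have h10 : 1 - ε ≤ Real.exp δ := by
      have ha1 : L ≤ ε := by
        have h := Real.log_le_sub_one_of_pos hε'
        rw [hLdef]
        linarith only [h]
      have ha2 := Real.add_one_le_exp δ
      linarith only [ha1, ha2, hδ1]
    have h11 : Real.exp δ ≤ Real.exp L := Real.exp_le_exp.2 hδ2
    have h12 : Real.exp L = 1 + ε := Real.exp_log hε'
    have h13 : Real.exp δ ≤ 1 + ε := h12 ▸ h11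
    rw [abs_le]
    constructor
    · linarith only [h10]
    · linarith only [h13]
  · -- Rough equivalence
    refine ⟨1/M, 1, M, 1, 2, by positivity, one_pos, hM0, one_pos, ?_⟩
    intro x hx
    have hx0 : (0:ℝ) < x := by linarith
    have hu1 : (1:ℝ) ≤ Real.logb 2 x := by
      have h := Real.logb_le_logb_of_le h2b two_pos hx
      simpa using h
    set u : ℝ := Real.logb 2 x with hu
    have hmaxu : max u 1 = u := max_eq_left hu1
    have hu0 : (0:ℝ) < u := by linarith
    set s : ℝ := Real.logb 2 u with hs
    have hs0 : 0 ≤ s := Real.logb_nonneg h2b hu1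
    set m : ℕ := ⌊s⌋₊ with hm
    have hm1 : (m:ℝ) ≤ s := Nat.floor_le hs0
    have hm2 : s < m + 1 := Nat.lt_floor_add_one s
    have hxu : (2:ℝ) ^ u = x := Real.rpow_logb two_pos (by norm_num) hx0
    have hus : (2:ℝ) ^ s = u := Real.rpow_logb two_pos (by norm_num) hu0
    have hcast : ∀ k : ℕ, ((2:ℝ) ^ (2^k : ℕ)) = (2:ℝ) ^ ((2:ℝ)^(k:ℝ)) := by
      intro k
      rw [← Real.rpow_natCast 2 (2^k)]
      congr 1
      push_cast
      rw [← Real.rpow_natCast 2 k]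
    -- x between 2^(2^m) and 2^(2^(m+1))
    have hxl : ((2:ℝ) ^ (2^m : ℕ)) ≤ x := by
      rw [hcast m, ← hxu]
      apply Real.rpow_le_rpow_of_exponent_le one_le_two
      rw [← hus]
      exact Real.rpow_le_rpow_of_exponent_le one_le_two hm1
    have hxr : x ≤ ((2:ℝ) ^ (2^(m+1) : ℕ)) := by
      rw [hcast (m+1), ← hxu]
      apply Real.rpow_le_rpow_of_exponent_le one_le_two
      rw [← hus]
      apply Real.rpow_le_rpow_of_exponent_le one_le_two
      push_cast
      linarith only [hm2]
    have hx1 : x ∈ Ici (1:ℝ) := by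
      simp only [mem_Ici]; linarith
    -- f x lies between a m and a (m+1)
    have hfx : min (a m) (a (m+1)) ≤ f x ∧ f x ≤ max (a m) (a (m+1)) := by
      rcases hmono with hmon | hant
      · constructor
        · exact le_trans (min_le_left _ _) (hmon (hA1 m) hx1 hxl)
        · exact le_trans (hmon hx1 (hA1 (m+1)) hxr) (le_max_right _ _)
      · constructor
        · exact le_trans (min_le_right _ _) (hant hx1 (hA1 (m+1)) hxr)
        · exact le_trans (hant (hA1 m) hx1 hxl) (le_max_left _ _)
    -- g x lies between a m and a (m+1)
    have hgx : gaux f x = Real.exp (interpSeq b s) := by rw [hg x, hmaxu]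
    have hexpmin : Real.exp (min (b m) (b (m+1))) = min (a m) (a (m+1)) := by
      rw [Real.exp_monotone.map_min, hb]
      simp only []
      rw [Real.exp_log (hapos m), Real.exp_log (hapos (m+1))]
    have hexpmax : Real.exp (max (b m) (b (m+1))) = max (a m) (a (m+1)) := by
      rw [Real.exp_monotone.map_max, hb]
      simp only []
      rw [Real.exp_log (hapos m), Real.exp_log (hapos (m+1))]
    obtain ⟨hi1, hi2⟩ := interpSeq_mem b hs0
    have hgl : min (a m) (a (m+1)) ≤ gaux f x := by
      rw [hgx, ← hexpmin]
      exact Real.exp_le_exp.2 hi1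
    have hgu : gaux f x ≤ max (a m) (a (m+1)) := by
      rw [hgx, ← hexpmax]
      exact Real.exp_le_exp.2 hi2
    -- ratio bound
    have hrat : max (a m) (a (m+1)) ≤ M * min (a m) (a (m+1)) := by
      obtain ⟨hlo, hhi⟩ := hda m
      rcases le_total (a m) (a (m+1)) with h | h
      · rw [max_eq_right h, min_eq_left h]
        calc a (m+1) ≤ C' * a m := hhi
          _ ≤ M * a m := mul_le_mul_of_nonneg_right (le_max_left _ _) (hapos m).le
      · rw [max_eq_left h, min_eq_right h]
        have h1 : a m ≤ a (m+1) / c' := (le_div_iff₀ hc'0).2 (by linarith only [hlo])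
        calc a m ≤ a (m+1) / c' := h1
          _ = (1/c') * a (m+1) := by ring
          _ ≤ M * a (m+1) :=
            mul_le_mul_of_nonneg_right (le_max_right _ _) (hapos (m+1)).le
    constructor
    · rw [one_mul]
      have h2 : f x ≤ M * gaux f x :=
        le_trans hfx.2 (le_trans hrat (mul_le_mul_of_nonneg_left hgl hM0.le))
      calc 1/M * f x ≤ 1/M * (M * gaux f x) :=
            mul_le_mul_of_nonneg_left h2 (by positivity)
        _ = gaux f x := by field_simp
    · rw [one_mul]
      calc gaux f x ≤ max (a m) (a (m+1)) := hgu
        _ ≤ M * min (a m) (a (m+1)) := hrat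
        _ ≤ M * f x := mul_le_mul_of_nonneg_left hfx.1 hM0.le
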